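/- Let D ⊆ ℝ and suppose f_0, f_1, …, f_m are monotone real-valued functions defined on D, i.e. each f_k is either strictly increasing or strictly decreasing on D. Let G = {(f_0(x), f_1(x), …, f_m(x)) : x ∈ D} ⊆ ℝ^{m+1} (Euclidean space). Then H^1(G) ≤ Σ_{k=0}^m H^1(f_k(D)). -/

import Mathlib

/-!
Replacing each decreasing `f k` by `-f k` (an isometry of `ℝ`) makes every `f k` increasing.
Then `∑ k, |f k x - f k y| = |h x - h y|` for `h = ∑ k, f k`, so the curve `x ↦ (f k x)ₖ` is a
1-Lipschitz function of `h x`, and `H¹(G) ≤ λ(h '' D)`.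

For `λ((u + v) '' D) ≤ λ(u '' D) + λ(v '' D)` with `u`, `v` monotone, cover `u '' D` and `v '' D`
by open sets `U`, `V` of almost minimal measure and cut `D` along the components of `U` and `V`.
The pieces are order-separated, so their `u`-images have disjoint convex hulls inside `U` (and
likewise for `v` in `V`), while `(u + v)` maps each piece to a set of diameter at most the sum of
the diameters of its `u`- and `v`-images.
-/

open MeasureTheory Set Metric Function
open scoped ENNReal NNReal Pointwise

theorem Set.OrdConnected.forall_lt_or_forall_gt_of_disjoint {α : Type*} [LinearOrder α]
    {s t : Set α} (hs : s.OrdConnected) (ht : t.OrdConnected) (hst : Disjoint s t) :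
    (∀ a ∈ s, ∀ b ∈ t, a < b) ∨ ∀ a ∈ s, ∀ b ∈ t, b < a := by
  by_contra! h
  obtain ⟨⟨a, ha, b, hb, hba⟩, a', ha', b', hb', hab'⟩ := h
  rcases le_or_gt a b' with hab | hba'
  · exact hst.notMem_of_mem_left ha (ht.out hb hb' ⟨hba, hab⟩)
  · exact hst.notMem_of_mem_right hb' (hs.out ha' ha ⟨hab', hba'.le⟩)

theorem MonotoneOn.forall_lt_or_forall_gt_of_disjoint {α β : Type*} [LinearOrder α]
    [LinearOrder β] {f : α → β} {D : Set α} (hf : MonotoneOn f D) {s t : Set β}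
    (hs : s.OrdConnected) (ht : t.OrdConnected) (hst : Disjoint s t) :
    (∀ x ∈ D ∩ f ⁻¹' s, ∀ y ∈ D ∩ f ⁻¹' t, x < y) ∨ ∀ x ∈ D ∩ f ⁻¹' s, ∀ y ∈ D ∩ f ⁻¹' t, y < x :=
  (hs.forall_lt_or_forall_gt_of_disjoint ht hst).imp
    (fun h _ hx _ hy => hf.reflect_lt hx.1 hy.1 (h _ hx.2 _ hy.2))
    (fun h _ hx _ hy => hf.reflect_lt hy.1 hx.1 (h _ hx.2 _ hy.2))

theorem MonotoneOn.pairwise_image_separated {α β ι : Type*} [LinearOrder α] [Preorder β]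
    {f : α → β} {D : Set α} (hf : MonotoneOn f D) {P : ι → Set α} (hPD : ∀ i, P i ⊆ D)
    (hsep : Pairwise fun i j => (∀ x ∈ P i, ∀ y ∈ P j, x < y) ∨ ∀ x ∈ P i, ∀ y ∈ P j, y < x) :
    Pairwise fun i j => f '' P i ⊆ lowerBounds (f '' P j) ∨ f '' P j ⊆ lowerBounds (f '' P i) := by
  intro i j hij
  refine (hsep hij).imp ?_ ?_ <;> rintro h _ ⟨x, hx, rfl⟩ _ ⟨y, hy, rfl⟩
  · exact hf (hPD i hx) (hPD j hy) (h x hx y hy).le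
  · exact hf (hPD j hx) (hPD i hy) (h y hy x hx).le

theorem IsOpen.exists_countable_ordConnected_partition {U : Set ℝ} (hU : IsOpen U) :
    ∃ (ι : Type) (C : ι → Set ℝ), Countable ι ∧ Pairwise (Disjoint on C) ∧
      (∀ i, (C i).OrdConnected) ∧ ⋃ i, C i = U := by
  set 𝒞 := connectedComponentIn U '' U
  have hdisj : 𝒞.PairwiseDisjoint id := by
    rintro _ ⟨x, -, rfl⟩ _ ⟨y, -, rfl⟩ hne
    refine Set.disjoint_left.2 fun z hzx hzy => hne ?_
    rw [connectedComponentIn_eq hzx, connectedComponentIn_eq hzy]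
  have hcount : 𝒞.Countable := hdisj.countable_of_isOpen
    (by rintro _ ⟨x, -, rfl⟩; exact hU.connectedComponentIn)
    (by rintro _ ⟨x, hx, rfl⟩; exact ⟨x, mem_connectedComponentIn hx⟩)
  refine ⟨𝒞, Subtype.val, hcount.to_subtype, hdisj.subtype _ _, ?_, ?_⟩
  · rintro ⟨_, x, -, rfl⟩
    exact isPreconnected_connectedComponentIn.ordConnected
  · refine (iUnion_subset ?_).antisymm fun x hx => ?_
    · rintro ⟨_, x, -, rfl⟩
      exact connectedComponentIn_subset U x
    · exact mem_iUnion.2 ⟨⟨_, x, hx, rfl⟩, mem_connectedComponentIn hx⟩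

theorem tsum_ediam_le_volume {ι : Type*} {S : ι → Set ℝ} {U : Set ℝ}
    (hsep : Pairwise fun i j => S i ⊆ lowerBounds (S j) ∨ S j ⊆ lowerBounds (S i))
    (hU : ∀ i, ∀ x ∈ S i, ∀ y ∈ S i, Icc x y ⊆ U) :
    ∑' i, ediam (S i) ≤ volume U := by
  -- the open convex hulls of the `S i` are disjoint open subsets of `U`
  set H : ι → Set ℝ := fun i => ⋃ x ∈ S i, ⋃ y ∈ S i, Ioo x y
  have hdiam : ∀ i, ediam (S i) ≤ volume (H i) := by
    refine fun i => ediam_le fun x hx y hy => ?_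
    wlog hxy : x ≤ y generalizing x y
    · rw [edist_comm]; exact this y hy x hx (le_of_not_ge hxy)
    calc edist x y = volume (Ioo x y) := by
          rw [Real.volume_Ioo, edist_dist, dist_comm, Real.dist_eq, abs_of_nonneg (sub_nonneg.2 hxy)]
      _ ≤ volume (H i) :=
          measure_mono fun z hz => mem_iUnion₂.2 ⟨x, hx, mem_iUnion₂.2 ⟨y, hy, hz⟩⟩
  have hdisj : Pairwise (Disjoint on H) := by
    intro i j hij
    wlog h : S i ⊆ lowerBounds (S j) generalizing i j
    · exact (this hij.symm ((hsep hij).resolve_left h)).symm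
    simp only [onFun, H, disjoint_iUnion_left, disjoint_iUnion_right]
    intro x hx y hy a ha b hb
    exact Set.disjoint_left.2 fun z hz hz' => (hz.2.trans_le (h hb hx)).not_gt hz'.1
  have hHU : (⋃ i, H i) ⊆ U := iUnion_subset fun i => iUnion₂_subset fun x hx =>
    iUnion₂_subset fun y hy => Ioo_subset_Icc_self.trans (hU i x hx y hy)
  calc ∑' i, ediam (S i) ≤ ∑' i, volume (H i) := ENNReal.tsum_le_tsum hdiam
    _ ≤ volume (⋃ i, H i) := tsum_meas_le_meas_iUnion_of_disjoint _
        (fun i => (isOpen_biUnion fun x _ => isOpen_biUnion fun y _ => isOpen_Ioo).measurableSet)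
        hdisj
    _ ≤ volume U := measure_mono hHU

theorem ediam_image_add_le {α E : Type*} [SeminormedAddCommGroup E] (u v : α → E) (s : Set α) :
    ediam ((fun x => u x + v x) '' s) ≤ ediam (u '' s) + ediam (v '' s) :=
  calc ediam ((fun x => u x + v x) '' s) ≤ ediam (u '' s + v '' s) :=
        ediam_mono <| image_subset_iff.2 fun _ hx =>
          add_mem_add (mem_image_of_mem u hx) (mem_image_of_mem v hx)
    _ ≤ ediam (u '' s) + ediam (v '' s) := ediam_add_le _ _

theorem volume_image_add_le_of_mapsTo {D U V : Set ℝ} {u v : ℝ → ℝ} (hu : MonotoneOn u D)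
    (hv : MonotoneOn v D) (hU : IsOpen U) (hV : IsOpen V) (huU : MapsTo u D U)
    (hvV : MapsTo v D V) :
    volume ((fun x => u x + v x) '' D) ≤ volume U + volume V := by
  obtain ⟨ι, C, _, hCdisj, hC, hUC⟩ := hU.exists_countable_ordConnected_partition
  obtain ⟨κ, C', _, hC'disj, hC', hVC'⟩ := hV.exists_countable_ordConnected_partition
  set P : ι × κ → Set ℝ := fun p => D ∩ u ⁻¹' C p.1 ∩ v ⁻¹' C' p.2
  have hcover : D ⊆ ⋃ p, P p := fun x hx => by
    obtain ⟨i, hi⟩ := mem_iUnion.1 (hUC.symm ▸ huU hx)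
    obtain ⟨j, hj⟩ := mem_iUnion.1 (hVC'.symm ▸ hvV hx)
    exact mem_iUnion.2 ⟨(i, j), ⟨hx, hi⟩, hj⟩
  have hsep : Pairwise fun p q =>
      (∀ x ∈ P p, ∀ y ∈ P q, x < y) ∨ ∀ x ∈ P p, ∀ y ∈ P q, y < x := by
    rintro ⟨i, j⟩ ⟨i', j'⟩ hne
    by_cases hi : i = i'
    · have hj : j ≠ j' := fun hj => hne (by rw [hi, hj])
      exact (hv.forall_lt_or_forall_gt_of_disjoint (hC' j) (hC' j') (hC'disj hj)).imp
        (fun h x hx y hy => h x ⟨hx.1.1, hx.2⟩ y ⟨hy.1.1, hy.2⟩)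
        (fun h x hx y hy => h x ⟨hx.1.1, hx.2⟩ y ⟨hy.1.1, hy.2⟩)
    · exact (hu.forall_lt_or_forall_gt_of_disjoint (hC i) (hC i') (hCdisj hi)).imp
        (fun h x hx y hy => h x hx.1 y hy.1) (fun h x hx y hy => h x hx.1 y hy.1)
  have hPD : ∀ p, P p ⊆ D := fun p x hx => hx.1.1
  calc volume ((fun x => u x + v x) '' D)
      ≤ ∑' p, volume ((fun x => u x + v x) '' P p) := by
        grw [hcover, image_iUnion]; exact measure_iUnion_le _
    _ ≤ ∑' p, (ediam (u '' P p) + ediam (v '' P p)) :=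
        ENNReal.tsum_le_tsum fun p => (Real.volume_le_diam _).trans (ediam_image_add_le u v _)
    _ = ∑' p, ediam (u '' P p) + ∑' p, ediam (v '' P p) := ENNReal.tsum_add
    _ ≤ volume U + volume V := by
        gcongr
        · refine tsum_ediam_le_volume (hu.pairwise_image_separated hPD hsep) ?_
          rintro p _ ⟨x, hx, rfl⟩ _ ⟨y, hy, rfl⟩
          exact ((hC p.1).out hx.1.2 hy.1.2).trans (hUC ▸ subset_iUnion C p.1)
        · refine tsum_ediam_le_volume (hv.pairwise_image_separated hPD hsep) ?_
          rintro p _ ⟨x, hx, rfl⟩ _ ⟨y, hy, rfl⟩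
          exact ((hC' p.2).out hx.2 hy.2).trans (hVC' ▸ subset_iUnion C' p.2)

theorem volume_image_add_le {D : Set ℝ} {u v : ℝ → ℝ} (hu : MonotoneOn u D)
    (hv : MonotoneOn v D) :
    volume ((fun x => u x + v x) '' D) ≤ volume (u '' D) + volume (v '' D) := by
  refine ENNReal.le_of_forall_pos_le_add fun ε hε _ => ?_
  have hε2 : (ε : ℝ≥0∞) / 2 ≠ 0 := by simpa using hε.ne'
  obtain ⟨U, huU, hU, hUle⟩ := (u '' D).exists_isOpen_le_add volume hε2
  obtain ⟨V, hvV, hV, hVle⟩ := (v '' D).exists_isOpen_le_add volume hε2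
  calc volume ((fun x => u x + v x) '' D) ≤ volume U + volume V :=
        volume_image_add_le_of_mapsTo hu hv hU hV (mapsTo_iff_image_subset.2 huU)
          (mapsTo_iff_image_subset.2 hvV)
    _ ≤ volume (u '' D) + ε / 2 + (volume (v '' D) + ε / 2) := add_le_add hUle hVle
    _ = volume (u '' D) + volume (v '' D) + ε := by
        rw [add_add_add_comm, ENNReal.add_halves]

theorem volume_image_sum_le {ι : Type*} {D : Set ℝ} (s : Finset ι) {g : ι → ℝ → ℝ}
    (hg : ∀ k ∈ s, MonotoneOn (g k) D) :
    volume ((fun x => ∑ k ∈ s, g k x) '' D) ≤ ∑ k ∈ s, volume (g k '' D) := by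
  classical
  induction s using Finset.induction_on with
  | empty =>
    simpa using (subsingleton_singleton (a := (0 : ℝ))).anti
      (image_subset_iff.2 fun _ _ => rfl) |>.measure_zero volume
  | insert a s ha ih =>
    have hs : ∀ k ∈ s, MonotoneOn (g k) D := fun k hk => hg k (Finset.mem_insert_of_mem hk)
    simp only [Finset.sum_insert ha]
    calc volume ((fun x => g a x + ∑ k ∈ s, g k x) '' D)
        ≤ volume (g a '' D) + volume ((fun x => ∑ k ∈ s, g k x) '' D) :=
          volume_image_add_le (hg a (Finset.mem_insert_self a s))
            fun x hx y hy hxy => Finset.sum_le_sum fun k hk => hs k hk hx hy hxy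
      _ ≤ volume (g a '' D) + ∑ k ∈ s, volume (g k '' D) := by grw [ih hs]

theorem hausdorffMeasure_image_le_of_edist_le {α X Y : Type*} [EMetricSpace X]
    [MeasurableSpace X] [BorelSpace X] [EMetricSpace Y] [MeasurableSpace Y] [BorelSpace Y]
    {F : α → X} {h : α → Y} {D : Set α}
    (hFh : ∀ x ∈ D, ∀ y ∈ D, edist (F x) (F y) ≤ edist (h x) (h y)) {d : ℝ} (hd : 0 ≤ d) :
    μH[d] (F '' D) ≤ μH[d] (h '' D) := by
  rcases D.eq_empty_or_nonempty with rfl | ⟨x₀, hx₀⟩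
  · simp
  have : Nonempty α := ⟨x₀⟩
  -- `F` factors through `h` on `D` as `Φ ∘ h` with `Φ` 1-Lipschitz on `h '' D`
  set Φ : Y → X := F ∘ invFunOn h D
  have hΦ : ∀ x ∈ D, Φ (h x) = F x := fun x hx => by
    have hx' : ∃ a ∈ D, h a = h x := ⟨x, hx, rfl⟩
    refine edist_le_zero.1 ((hFh _ (invFunOn_mem hx') x hx).trans ?_)
    rw [invFunOn_eq hx', edist_self]
  have hlip : LipschitzOnWith 1 Φ (h '' D) := by
    rintro _ ⟨x, hx, rfl⟩ _ ⟨y, hy, rfl⟩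
    rw [hΦ x hx, hΦ y hy, ENNReal.coe_one, one_mul]
    exact hFh x hx y hy
  calc μH[d] (F '' D) = μH[d] (Φ '' (h '' D)) := by
        rw [image_image]; exact congrArg _ (image_congr fun x hx => (hΦ x hx).symm)
    _ ≤ (1 : ℝ≥0) ^ d * μH[d] (h '' D) := hlip.hausdorffMeasure_image_le hd
    _ = μH[d] (h '' D) := by simp

theorem EuclideanSpace.dist_le_sum_dist {ι : Type*} [Fintype ι] (a b : EuclideanSpace ℝ ι) :
    dist a b ≤ ∑ i, dist (a i) (b i) := by
  rw [EuclideanSpace.dist_eq, Real.sqrt_le_iff]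
  exact ⟨Finset.sum_nonneg fun i _ => dist_nonneg,
    Finset.sum_sq_le_sq_sum_of_nonneg fun i _ => dist_nonneg⟩

theorem dist_sum_eq_sum_dist_of_monotoneOn {ι : Type*} (s : Finset ι) {g : ι → ℝ → ℝ}
    {D : Set ℝ} (hg : ∀ k ∈ s, MonotoneOn (g k) D) {x y : ℝ} (hx : x ∈ D) (hy : y ∈ D) :
    dist (∑ k ∈ s, g k x) (∑ k ∈ s, g k y) = ∑ k ∈ s, dist (g k x) (g k y) := by
  wlog hxy : y ≤ x generalizing x y
  · simp_rw [dist_comm (∑ k ∈ s, g k x), dist_comm (g _ x)]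
    exact this hy hx (le_of_not_ge hxy)
  have hk : ∀ k ∈ s, dist (g k x) (g k y) = g k x - g k y := fun k hk => by
    rw [Real.dist_eq, abs_of_nonneg (sub_nonneg.2 (hg k hk hy hx hxy))]
  rw [Finset.sum_congr rfl hk, Finset.sum_sub_distrib, Real.dist_eq,
    abs_of_nonneg (sub_nonneg.2 (Finset.sum_le_sum fun k hk => hg k hk hy hx hxy))]

theorem exists_isometryEquiv_monotoneOn_comp {f : ℝ → ℝ} {D : Set ℝ}
    (hf : MonotoneOn f D ∨ AntitoneOn f D) : ∃ e : ℝ ≃ᵢ ℝ, MonotoneOn (e ∘ f) D := by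
  rcases hf with hf | hf
  · exact ⟨IsometryEquiv.refl ℝ, hf⟩
  · exact ⟨IsometryEquiv.neg ℝ, hf.neg⟩

/-- If `f₀, …, f_m` are strictly monotone functions on `D ⊆ ℝ` and
`G = {(f₀(x), …, f_m(x)) : x ∈ D} ⊆ ℝ^{m+1}` (Euclidean space), then
`H¹(G) ≤ Σₖ H¹(fₖ(D))`. -/
theorem stmt_7 (D : Set ℝ) (m : ℕ) (f : Fin (m + 1) → ℝ → ℝ)
    (hf : ∀ k, StrictMonoOn (f k) D ∨ StrictAntiOn (f k) D) :
    μH[1] ((fun x : ℝ => (WithLp.toLp 2 (fun k => f k x) : EuclideanSpace ℝ (Fin (m + 1)))) '' D) ≤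
      ∑ k : Fin (m + 1), μH[1] (f k '' D) := by
  choose e he using fun k => exists_isometryEquiv_monotoneOn_comp
    ((hf k).imp StrictMonoOn.monotoneOn StrictAntiOn.antitoneOn)
  have hdist : ∀ x ∈ D, ∀ y ∈ D,
      edist (WithLp.toLp 2 (fun k => f k x) : EuclideanSpace ℝ (Fin (m + 1)))
        (WithLp.toLp 2 fun k => f k y) ≤
      edist (∑ k, (e k ∘ f k) x) (∑ k, (e k ∘ f k) y) := by
    intro x hx y hy
    rw [edist_dist, edist_dist, dist_sum_eq_sum_dist_of_monotoneOn _ (fun k _ => he k) hx hy]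
    refine ENNReal.ofReal_le_ofReal ((EuclideanSpace.dist_le_sum_dist _ _).trans_eq ?_)
    simp [(e _).dist_eq]
  calc _ ≤ μH[1] ((fun x => ∑ k, (e k ∘ f k) x) '' D) :=
        hausdorffMeasure_image_le_of_edist_le hdist zero_le_one
    _ ≤ ∑ k, μH[1] ((e k ∘ f k) '' D) := by
        simpa only [hausdorffMeasure_real] using volume_image_sum_le _ fun k _ => he k
    _ = ∑ k, μH[1] (f k '' D) := by simp only [image_comp, IsometryEquiv.hausdorffMeasure_image]
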